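/- Let M ⊆ T^d be a measurable subset of the d-dimensional torus. Then the set of vectors a ∈ ℝ^d generating irrelevant directions, i.e. {a ∈ ℝ^d : Λ_M(κa) = 0 for all κ ∈ ℝ}, is a linear subspace of ℝ^d. -/

import Mathlib

open MeasureTheory Real

noncomputable section

instance : Fact (0 < 2 * π) := ⟨Real.two_pi_pos⟩

/-- The `d`-dimensional torus `(ℝ/2πℤ)^d`, equipped with its (product Lebesgue) measure. -/
abbrev Torus (d : ℕ) := Fin d → AddCircle (2 * π)

/-- The translate `M + a` of a subset of the torus by a vector `a ∈ ℝ^d`: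
`x ∈ M + a ↔ x - a ∈ M`. -/
def torusTranslate (d : ℕ) (M : Set (Torus d)) (a : Fin d → ℝ) : Set (Torus d) :=
  (fun x i => x i - ((a i : ℝ) : AddCircle (2 * π))) ⁻¹' M

/-- `Λ_M(a) = |M \ (M + a)|`, the Lebesgue measure of the part of `M` not covered by its
translate. -/
def Lam (d : ℕ) (M : Set (Torus d)) (a : Fin d → ℝ) : ℝ :=
  (volume (M \ torusTranslate d M a)).toReal

/-!
The function `a ↦ Λ_M(a)` is nonnegative, vanishes at `0` and is subadditive, because
`M \ (M + a + b) ⊆ (M \ (M + b)) ∪ ((M \ (M + a)) + b)` and the measure is translation invariant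
(for arbitrary, not necessarily measurable, sets). Hence the vectors `a` with `Λ_M(κa) = 0` for all
`κ` are closed under addition, and trivially under scaling.
-/

open Set

section AddGroup

variable {G : Type*} [AddGroup G] [MeasurableSpace G] [MeasurableAdd G]
  (μ : Measure G) [μ.IsAddRightInvariant]

theorem measure_preimage_sub_right (g : G) (A : Set G) : μ ((· - g) ⁻¹' A) = μ A := by
  simp_rw [sub_eq_add_neg]
  exact measure_preimage_add_right μ (-g) A

theorem measure_diff_preimage_sub_add_le (M : Set G) (g h : G) :
    μ (M \ (· - (g + h)) ⁻¹' M) ≤ μ (M \ (· - g) ⁻¹' M) + μ (M \ (· - h) ⁻¹' M) := by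
  have hcomp : (· - (g + h)) ⁻¹' M = (· - h) ⁻¹' ((· - g) ⁻¹' M) := by
    ext x
    simp [sub_add_eq_sub_sub_swap]
  calc μ (M \ (· - (g + h)) ⁻¹' M)
      ≤ μ (M \ (· - h) ⁻¹' M) + μ ((· - h) ⁻¹' M \ (· - h) ⁻¹' ((· - g) ⁻¹' M)) := by
        rw [hcomp]
        exact (measure_mono (sdiff_triangle _ _ _)).trans (measure_union_le _ _)
    _ = μ (M \ (· - h) ⁻¹' M) + μ (M \ (· - g) ⁻¹' M) := by
        rw [← preimage_sdiff, measure_preimage_sub_right]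
    _ = μ (M \ (· - g) ⁻¹' M) + μ (M \ (· - h) ⁻¹' M) := add_comm _ _

end AddGroup

def torusProj (d : ℕ) : (Fin d → ℝ) →+ Torus d :=
  AddMonoidHom.compLeft (QuotientAddGroup.mk' _) (Fin d)

theorem torusTranslate_eq_preimage (d : ℕ) (M : Set (Torus d)) (a : Fin d → ℝ) :
    torusTranslate d M a = (· - torusProj d a) ⁻¹' M :=
  rfl

theorem Lam_nonneg (d : ℕ) (M : Set (Torus d)) (a : Fin d → ℝ) : 0 ≤ Lam d M a :=
  ENNReal.toReal_nonneg

theorem Lam_zero (d : ℕ) (M : Set (Torus d)) : Lam d M 0 = 0 := by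
  simp [Lam, torusTranslate_eq_preimage]

theorem Lam_add_le (d : ℕ) (M : Set (Torus d)) (a b : Fin d → ℝ) :
    Lam d M (a + b) ≤ Lam d M a + Lam d M b := by
  rw [Lam, Lam, Lam, ← ENNReal.toReal_add (measure_ne_top _ _) (measure_ne_top _ _)]
  refine ENNReal.toReal_mono (by finiteness) ?_
  simpa only [torusTranslate_eq_preimage, map_add] using
    measure_diff_preimage_sub_add_le volume M (torusProj d a) (torusProj d b)

def irrelevantDirections (d : ℕ) (M : Set (Torus d)) : Submodule ℝ (Fin d → ℝ) where
  carrier := {a | ∀ κ : ℝ, Lam d M (κ • a) = 0}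
  add_mem' {a b} ha hb κ := by
    refine le_antisymm ?_ (Lam_nonneg d M _)
    simpa only [smul_add, ha κ, hb κ, add_zero] using Lam_add_le d M (κ • a) (κ • b)
  zero_mem' κ := by rw [smul_zero, Lam_zero]
  smul_mem' c a ha κ := by
    rw [smul_smul]
    exact ha (κ * c)

theorem irrelevant_directions_subspace_general (d : ℕ) (M : Set (Torus d)) :
    ∃ S : Submodule ℝ (Fin d → ℝ),
      (S : Set (Fin d → ℝ)) = {a : Fin d → ℝ | ∀ κ : ℝ, Lam d M (κ • a) = 0} :=
  ⟨irrelevantDirections d M, rfl⟩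

/-- For a measurable `M ⊆ T^d`, the set
`{a ∈ ℝ^d : Λ_M(κa) = 0 for all κ ∈ ℝ}` of vectors generating irrelevant directions is a
linear subspace of `ℝ^d`. -/
theorem irrelevant_directions_subspace (d : ℕ) (M : Set (Torus d)) (hM : MeasurableSet M) :
    ∃ S : Submodule ℝ (Fin d → ℝ),
      (S : Set (Fin d → ℝ)) = {a : Fin d → ℝ | ∀ κ : ℝ, Lam d M (κ • a) = 0} :=
  irrelevant_directions_subspace_general d M
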